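/- Let k be an algebraically closed field and f a polynomial automorphism of A²_k of degree ≥ 2. Then the following are equivalent: (1) the indeterminacy points at infinity I_f and I_{f⁻¹} are distinct; (2) deg(f²) = deg(f)². -/

import Mathlib

open MvPolynomial

/-- Composition of polynomial endomorphisms of affine `n`-space. -/
noncomputable def mvComp {k : Type*} [CommSemiring k] {n : ℕ}
    (g f : Fin n → MvPolynomial (Fin n) k) : Fin n → MvPolynomial (Fin n) k :=
  fun i => MvPolynomial.bind₁ f (g i)

/-- The degree of a polynomial endomorphism of affine `n`-space. -/
noncomputable def mvDeg {k : Type*} [CommSemiring k] {n : ℕ}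
    (f : Fin n → MvPolynomial (Fin n) k) : ℕ :=
  Finset.univ.sup fun i => (f i).totalDegree

/-- The highest homogeneous part of a polynomial endomorphism. -/
noncomputable def topPart {k : Type*} [CommSemiring k] {n : ℕ}
    (f : Fin n → MvPolynomial (Fin n) k) : Fin n → MvPolynomial (Fin n) k :=
  fun i => MvPolynomial.homogeneousComponent (mvDeg f) (f i)

/-!
Write `d = deg f`, `e = deg f⁻¹`, `F = topPart f`, `G = topPart f⁻¹`. Comparing the parts of degree
`d e ≥ 2` in `f ∘ f⁻¹ = id = f⁻¹ ∘ f` gives `G(F) = 0` and `F(G) = 0`. A nonzero binary form over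
an algebraically closed field splits into linear factors, so the two components of `F` (resp. `G`)
are proportional: `F = c • P`, `G = c' • Q`, and then `P(c') = 0`, `Q(c) = 0`. The part of degree
`d²` of `f ∘ f` is `F(F) = P(c) • c • P^d`, hence `deg f² = d²` iff `P(c) ≠ 0`.

It remains to see that `P` has at most one zero in `ℙ¹`. Pick `i` with `deg f_i = d`; since `f` is an
automorphism, the curve `f_i = 0` is parametrized isomorphically by some `γ : 𝔸¹ → 𝔸²`. For a
direction `u` let `ℓ_u` be the linear form vanishing on `k ∙ u`. Then `dim_k k[x, y] ⧸ (f_i, ℓ_u)`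
is both `deg ℓ_u(γ)`, which is `deg γ` unless `u` is the direction of the leading coefficient of
`γ`, and `deg f_i(t u)`, which is `d` unless `P(u) = 0`. Hence `d ≤ deg γ`, and every zero of `P`
is the leading direction of `γ`.
-/

open scoped Polynomial

namespace Polynomial

variable {R S : Type*} [CommSemiring R] [CommSemiring S]

theorem natDegree_prod_pow_le {ι : Type*} (s : Finset ι) (e : ι → ℕ) {q : ι → S[X]} {D : ℕ}
    (hq : ∀ i, (q i).natDegree ≤ D) :
    (∏ i ∈ s, q i ^ e i).natDegree ≤ (∑ i ∈ s, e i) * D := by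
  rw [Finset.sum_mul]
  exact (natDegree_prod_le _ _).trans
    (Finset.sum_le_sum fun i _ => natDegree_pow_le_of_le _ (hq i))

theorem coeff_prod_pow_of_natDegree_le {ι : Type*} (s : Finset ι) (e : ι → ℕ) {q : ι → S[X]}
    {D : ℕ} (hq : ∀ i, (q i).natDegree ≤ D) :
    (∏ i ∈ s, q i ^ e i).coeff ((∑ i ∈ s, e i) * D) = ∏ i ∈ s, (q i).coeff D ^ e i := by
  classical
  induction s using Finset.induction_on with
  | empty => simp
  | insert a s ha ih =>
    rw [Finset.prod_insert ha, Finset.sum_insert ha, add_mul,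
      coeff_mul_add_eq_of_natDegree_le (natDegree_pow_le_of_le _ (hq a))
        (natDegree_prod_pow_le s e hq),
      coeff_pow_of_natDegree_le (hq a), ih, Finset.prod_insert ha]

theorem surjective_of_apply_eq_X {A : Type*} [CommSemiring A] [Algebra R A] {Θ : A →ₐ[R] R[X]}
    {a : A} (ha : Θ a = X) : Function.Surjective Θ :=
  fun p => ⟨aeval a p, by rw [← aeval_algHom_apply, ha, aeval_X_left_apply]⟩

theorem coeff_max_natDegree_ne_zero {p q : R[X]} (h : 0 < max p.natDegree q.natDegree) :
    p.coeff (max p.natDegree q.natDegree) ≠ 0 ∨ q.coeff (max p.natDegree q.natDegree) ≠ 0 := by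
  rcases max_choice p.natDegree q.natDegree with hp | hq
  · refine Or.inl fun h0 => ?_
    rw [hp] at h h0
    rw [← leadingCoeff, leadingCoeff_eq_zero] at h0
    simp [h0] at h
  · refine Or.inr fun h0 => ?_
    rw [hq] at h h0
    rw [← leadingCoeff, leadingCoeff_eq_zero] at h0
    simp [h0] at h

end Polynomial

namespace MvPolynomial

section LeadingCoefficient

variable {R S σ : Type*} [CommSemiring R] [CommSemiring S] [Algebra R S]
  {q : σ → S[X]} {D : ℕ}

theorem natDegree_aeval_monomial_le (hq : ∀ i, (q i).natDegree ≤ D) (d : σ →₀ ℕ) (c : R) :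
    (aeval q (monomial d c)).natDegree ≤ d.degree * D := by
  rw [aeval_monomial, Polynomial.algebraMap_apply]
  exact (Polynomial.natDegree_C_mul_le _ _).trans (Polynomial.natDegree_prod_pow_le _ _ hq)

theorem coeff_aeval_monomial (hq : ∀ i, (q i).natDegree ≤ D) (d : σ →₀ ℕ) (c : R) :
    (aeval q (monomial d c)).coeff (d.degree * D) =
      aeval (fun i => (q i).coeff D) (monomial d c) := by
  rw [aeval_monomial, aeval_monomial, Polynomial.algebraMap_apply, Polynomial.coeff_C_mul]
  exact congrArg _ (Polynomial.coeff_prod_pow_of_natDegree_le _ _ hq)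

theorem natDegree_aeval_le (hq : ∀ i, (q i).natDegree ≤ D) {P : MvPolynomial σ R} {n : ℕ}
    (hP : P.totalDegree ≤ n) : (aeval q P).natDegree ≤ n * D := by
  rw [P.as_sum, map_sum]
  refine Polynomial.natDegree_sum_le_of_forall_le _ _ fun d hd => ?_
  exact (natDegree_aeval_monomial_le hq d _).trans
    (Nat.mul_le_mul_right D ((le_totalDegree hd).trans hP))

theorem coeff_aeval_of_totalDegree_le (hD : 0 < D) (hq : ∀ i, (q i).natDegree ≤ D)
    {P : MvPolynomial σ R} {n : ℕ} (hP : P.totalDegree ≤ n) :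
    (aeval q P).coeff (n * D) = aeval (fun i => (q i).coeff D) (homogeneousComponent n P) := by
  conv_lhs => rw [P.as_sum]
  conv_rhs => rw [P.as_sum]
  simp only [map_sum, Polynomial.finsetSum_coeff]
  refine Finset.sum_congr rfl fun d hd => ?_
  rw [homogeneousComponent_of_mem (isHomogeneous_monomial _ rfl)]
  split_ifs with h
  · rw [h, coeff_aeval_monomial hq]
  · have hlt : d.degree < n := lt_of_le_of_ne ((le_totalDegree hd).trans hP) (Ne.symm h)
    rw [map_zero]
    exact Polynomial.coeff_eq_zero_of_natDegree_lt ((natDegree_aeval_monomial_le hq d _).trans_lt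
      (Nat.mul_lt_mul_of_pos_right hlt hD))

end LeadingCoefficient

theorem homogeneousComponent_totalDegree_ne_zero {R σ : Type*} [CommSemiring R]
    {p : MvPolynomial σ R} (hp : p ≠ 0) : homogeneousComponent p.totalDegree p ≠ 0 := by
  obtain ⟨d, hd, hdeg⟩ := Finset.exists_mem_eq_sup p.support (support_nonempty.mpr hp)
    fun d => d.sum fun _ e => e
  intro h
  have := congrArg (coeff d) h
  rw [coeff_homogeneousComponent, if_pos (show d.degree = p.totalDegree from hdeg.symm),
    coeff_zero] at this
  exact mem_support_iff.mp hd this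

section Dilation

variable {R σ τ : Type*} [CommSemiring R]

noncomputable def dilation : MvPolynomial σ R →ₐ[R] (MvPolynomial σ R)[X] :=
  aeval fun i => Polynomial.C (X i) * Polynomial.X

theorem dilation_monomial (d : σ →₀ ℕ) (c : R) :
    dilation (monomial d c) = Polynomial.C (monomial d c) * Polynomial.X ^ d.degree := by
  rw [dilation, aeval_monomial, Finsupp.prod, monomial_eq, Finsupp.prod,
    Polynomial.algebraMap_apply]
  simp only [mul_pow, Finset.prod_mul_distrib, Finset.prod_pow_eq_pow_sum, ← map_pow, ← map_prod,
    ← mul_assoc, ← Polynomial.C_mul]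
  rfl

theorem coeff_dilation (p : MvPolynomial σ R) (n : ℕ) :
    (dilation p).coeff n = homogeneousComponent n p := by
  induction p using MvPolynomial.induction_on' with
  | monomial d c =>
    rw [dilation_monomial, Polynomial.coeff_C_mul_X_pow,
      homogeneousComponent_of_mem (isHomogeneous_monomial c rfl)]
  | add p q hp hq => rw [map_add, Polynomial.coeff_add, hp, hq, map_add]

theorem natDegree_dilation_le_iff {p : MvPolynomial σ R} {n : ℕ} :
    (dilation p).natDegree ≤ n ↔ p.totalDegree ≤ n := by
  rw [Polynomial.natDegree_le_iff_coeff_eq_zero]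
  simp only [coeff_dilation]
  refine ⟨fun h => Finset.sup_le fun d hd => ?_, fun h m hm => homogeneousComponent_eq_zero _ _
    (h.trans_lt (by exact_mod_cast hm))⟩
  by_contra hlt
  have hd' : coeff d (homogeneousComponent (d.sum fun _ e => e) p) = coeff d p := by
    rw [coeff_homogeneousComponent]
    exact if_pos rfl
  rw [h _ (by exact_mod_cast not_le.mp hlt)] at hd'
  exact mem_support_iff.mp hd (by simpa using hd'.symm)

variable {q : σ → MvPolynomial τ R} {D n : ℕ} {P : MvPolynomial σ R}

theorem dilation_bind₁ : dilation (bind₁ q P) = aeval (fun i => dilation (q i)) P :=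
  aeval_bind₁ _ _ _

theorem totalDegree_bind₁_le (hq : ∀ i, (q i).totalDegree ≤ D) (hP : P.totalDegree ≤ n) :
    (bind₁ q P).totalDegree ≤ n * D := by
  rw [← natDegree_dilation_le_iff, dilation_bind₁]
  exact natDegree_aeval_le (fun i => natDegree_dilation_le_iff.mpr (hq i)) hP

theorem homogeneousComponent_bind₁ (hD : 0 < D) (hq : ∀ i, (q i).totalDegree ≤ D)
    (hP : P.totalDegree ≤ n) :
    homogeneousComponent (n * D) (bind₁ q P) =
      bind₁ (fun i => homogeneousComponent D (q i)) (homogeneousComponent n P) := by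
  rw [← coeff_dilation, dilation_bind₁,
    coeff_aeval_of_totalDegree_le hD (fun i => natDegree_dilation_le_iff.mpr (hq i)) hP]
  simp only [coeff_dilation]
  rfl

end Dilation

theorem IsHomogeneous.aeval_smul {R σ A : Type*} [CommSemiring R] [CommSemiring A] [Algebra R A]
    {F : MvPolynomial σ R} {m : ℕ} (hF : F.IsHomogeneous m) (c : σ → R) (a : A) :
    MvPolynomial.aeval (fun i => c i • a) F = eval c F • a ^ m := by
  conv_lhs => rw [F.as_sum]
  conv_rhs => rw [F.as_sum]
  rw [map_sum, map_sum, Finset.sum_smul]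
  refine Finset.sum_congr rfl fun d hd => ?_
  have hdeg : ∑ i ∈ d.support, d i = m := (hF.degree_eq_sum_deg_support hd).symm
  rw [aeval_monomial, eval_monomial, Finsupp.prod, Finsupp.prod]
  simp only [Algebra.smul_def, mul_pow, Finset.prod_mul_distrib, Finset.prod_pow_eq_pow_sum, hdeg,
    map_mul, map_prod, map_pow]
  ring

section BinaryForms

variable {k : Type*} [Field k] [IsAlgClosed k]

theorem IsHomogeneous.exists_eq_mul_prod {F : MvPolynomial (Fin 2) k} {m : ℕ}
    (hF : F.IsHomogeneous m) : ∃ (a : k) (e : ℕ) (s : Multiset k),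
      F = C a * X 1 ^ e * (s.map fun t => X 0 - C t * X 1).prod := by
  set p := MvPolynomial.aeval (![Polynomial.X, 1] : Fin 2 → k[X]) F
  have hp : p.natDegree ≤ m := by
    simpa using natDegree_aeval_le (D := 1) (fun i => by fin_cases i <;> simp) hF.totalDegree_le
  refine ⟨p.leadingCoeff, m - p.natDegree, p.roots, ?_⟩
  have hlin (t : k) : (X 0 - C t * X 1 : MvPolynomial (Fin 2) k).IsHomogeneous 1 :=
    (isHomogeneous_X k 0).sub (by simpa using isHomogeneous_C_mul_X t 1)
  have hprod : ((p.roots.map fun t => X 0 - C t * X 1).prod : MvPolynomial (Fin 2) k).IsHomogeneous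
      p.natDegree := by
    rw [← IsAlgClosed.card_roots_eq_natDegree]
    induction p.roots using Multiset.induction_on with
    | empty => simpa using isHomogeneous_one (Fin 2) k
    | cons t s ih => simpa [add_comm] using (hlin t).mul ih
  have hG : (C p.leadingCoeff * X 1 ^ (m - p.natDegree) *
      (p.roots.map fun t => X 0 - C t * X 1).prod : MvPolynomial (Fin 2) k).IsHomogeneous m := by
    simpa [Nat.sub_add_cancel hp] using
      (((isHomogeneous_C (Fin 2) p.leadingCoeff).mul
        ((isHomogeneous_X k 1).pow (m - p.natDegree))).mul hprod)
  rw [← Polynomial.homogenize_eq_of_isHomogeneous hF rfl]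
  refine Polynomial.homogenize_eq_of_isHomogeneous hG ?_
  change _ = p
  conv_rhs => rw [← Polynomial.C_leadingCoeff_mul_prod_multiset_X_sub_C
    (IsAlgClosed.card_roots_eq_natDegree (p := p))]
  simp [map_multiset_prod, Multiset.map_map]

variable {S : Type*} [CommRing S] [IsDomain S] [Algebra k S] {F : MvPolynomial (Fin 2) k} {m : ℕ}
  {T : Fin 2 → S}

theorem IsHomogeneous.eq_zero_or_eq_smul_of_aeval_eq_zero (hF : F.IsHomogeneous m) (hF0 : F ≠ 0)
    (hT : MvPolynomial.aeval T F = 0) : T 1 = 0 ∨ ∃ t : k, T 0 = t • T 1 := by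
  obtain ⟨a, e, s, rfl⟩ := hF.exists_eq_mul_prod
  have ha : algebraMap k S a ≠ 0 := by
    rintro h
    rw [(map_eq_zero_iff _ (algebraMap k S).injective).mp h] at hF0
    simp at hF0
  simp only [map_mul, map_pow, map_multiset_prod, Multiset.map_map, Function.comp_def, map_sub,
    aeval_C, aeval_X, mul_eq_zero, ha, false_or, pow_eq_zero_iff', Multiset.prod_eq_zero_iff,
    Multiset.mem_map, sub_eq_zero] at hT
  rcases hT with ⟨h, -⟩ | ⟨t, -, ht⟩
  · exact Or.inl h
  · exact Or.inr ⟨t, by rw [ht, Algebra.smul_def]⟩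

theorem IsHomogeneous.exists_eq_smul_of_aeval_eq_zero (hF : F.IsHomogeneous m) (hF0 : F ≠ 0)
    (hT : MvPolynomial.aeval T F = 0) {i₀ : Fin 2} (hi₀ : T i₀ ≠ 0) :
    ∃ c : Fin 2 → k, c i₀ = 1 ∧ ∀ i, T i = c i • T i₀ := by
  rcases hF.eq_zero_or_eq_smul_of_aeval_eq_zero hF0 hT with h | ⟨t, ht⟩ <;> fin_cases i₀
  · exact ⟨![1, 0], rfl, by simp [Fin.forall_fin_two, h]⟩
  · exact absurd h hi₀
  · have ht0 : t ≠ 0 := by rintro rfl; simp_all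
    exact ⟨![1, t⁻¹], rfl, by simp [Fin.forall_fin_two, ht, smul_smul, ht0]⟩
  · exact ⟨![t, 1], rfl, by simp [Fin.forall_fin_two, ht]⟩

end BinaryForms

theorem aeval_sub_aeval_mem {R σ S : Type*} [CommSemiring R] [CommRing S] [Algebra R S]
    (I : Ideal S) {a b : σ → S} (h : ∀ i, a i - b i ∈ I) (F : MvPolynomial σ R) :
    aeval a F - aeval b F ∈ I := by
  rw [← Ideal.Quotient.eq, ← Ideal.Quotient.mkₐ_eq_mk R, comp_aeval_apply, comp_aeval_apply]
  congr 2 with i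
  exact Ideal.Quotient.eq.mpr (h i)

theorem ker_eq_span_of_aeval_apply_X_sub_X_mem {R σ : Type*} [CommRing R]
    {Θ : MvPolynomial σ R →ₐ[R] R[X]} {a b : MvPolynomial σ R} (hb : Θ b = 0)
    (hX : ∀ i, Polynomial.aeval a (Θ (X i)) - X i ∈ Ideal.span {b}) :
    RingHom.ker Θ = Ideal.span {b} := by
  have hmod : (Ideal.Quotient.mkₐ R (Ideal.span {b})).comp ((Polynomial.aeval a).comp Θ) =
      Ideal.Quotient.mkₐ R (Ideal.span {b}) :=
    algHom_ext fun i => Ideal.Quotient.eq.mpr (hX i)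
  refine le_antisymm (fun P hP => ?_) ((Ideal.span_singleton_le_iff_mem _).mpr hb)
  have := DFunLike.congr_fun hmod P
  simp only [AlgHom.comp_apply, RingHom.mem_ker.mp hP, map_zero] at this
  exact Ideal.Quotient.eq_zero_iff_mem.mp this.symm

end MvPolynomial

theorem Ideal.finrank_quotient_comap_of_surjective {k A B : Type*} [Field k] [CommRing A]
    [CommRing B] [Algebra k A] [Algebra k B] {Θ : A →ₐ[k] B} (hΘ : Function.Surjective Θ)
    (I : Ideal B) : Module.finrank k (A ⧸ I.comap Θ) = Module.finrank k (B ⧸ I) := by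
  have hφ : Function.Surjective ((Quotient.mkₐ k I).comp Θ) :=
    (Quotient.mkₐ_surjective k I).comp hΘ
  have hker : RingHom.ker ((Quotient.mkₐ k I).comp Θ) = I.comap Θ := by
    ext a
    simp [Quotient.eq_zero_iff_mem]
  rw [← hker]
  exact (quotientKerAlgEquivOfSurjective hφ).toLinearEquiv.finrank_eq

/-- Both sides are `dim_k A ⧸ (a, b)`. -/
theorem Polynomial.natDegree_eq_natDegree_of_ker_eq_span {k A : Type*} [Field k] [CommRing A]
    [Algebra k A] {Θ ρ : A →ₐ[k] k[X]} (hΘ : Function.Surjective Θ) (hρ : Function.Surjective ρ)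
    {a b : A} (ha : RingHom.ker Θ = Ideal.span {a}) (hb : RingHom.ker ρ = Ideal.span {b}) :
    (Θ b).natDegree = (ρ a).natDegree := by
  have hcomap {φ : A →ₐ[k] k[X]} (hφ : Function.Surjective φ) (x : A) :
      (Ideal.span {φ x}).comap φ = Ideal.span {x} ⊔ RingHom.ker φ := by
    rw [← Set.image_singleton, ← Ideal.map_span, Ideal.comap_map_of_surjective' _ hφ]
  rw [← finrank_quotient_span_eq_natDegree, ← finrank_quotient_span_eq_natDegree,
    ← Ideal.finrank_quotient_comap_of_surjective hΘ,
    ← Ideal.finrank_quotient_comap_of_surjective hρ, hcomap hΘ, hcomap hρ, ha, hb, sup_comm]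

section PolynomialMaps

variable {R : Type*} [CommSemiring R] {n : ℕ}

theorem totalDegree_le_mvDeg (f : Fin n → MvPolynomial (Fin n) R) (i : Fin n) :
    (f i).totalDegree ≤ mvDeg f :=
  Finset.le_sup (f := fun i => (f i).totalDegree) (Finset.mem_univ i)

theorem exists_totalDegree_eq_mvDeg [NeZero n] (f : Fin n → MvPolynomial (Fin n) R) :
    ∃ i, (f i).totalDegree = mvDeg f :=
  let ⟨i, _, hi⟩ := Finset.exists_mem_eq_sup _ Finset.univ_nonempty fun i => (f i).totalDegree
  ⟨i, hi.symm⟩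

theorem isHomogeneous_topPart (f : Fin n → MvPolynomial (Fin n) R) (i : Fin n) :
    (topPart f i).IsHomogeneous (mvDeg f) :=
  homogeneousComponent_isHomogeneous _ _

theorem topPart_ne_zero {f : Fin n → MvPolynomial (Fin n) R} {i : Fin n}
    (hi : (f i).totalDegree = mvDeg f) (hf : 0 < mvDeg f) : topPart f i ≠ 0 := by
  have hfi : f i ≠ 0 := by rintro h; simp [h] at hi; omega
  simpa [topPart, hi] using homogeneousComponent_totalDegree_ne_zero hfi

theorem mvDeg_X [Nontrivial R] [NeZero n] : mvDeg (X : Fin n → MvPolynomial (Fin n) R) = 1 := by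
  simp [mvDeg, totalDegree_X, Finset.sup_const Finset.univ_nonempty]

theorem mvDeg_mvComp_le (g f : Fin n → MvPolynomial (Fin n) R) :
    mvDeg (mvComp g f) ≤ mvDeg g * mvDeg f :=
  Finset.sup_le fun i _ => totalDegree_bind₁_le (totalDegree_le_mvDeg f) (totalDegree_le_mvDeg g i)

theorem mvDeg_pos_of_bind₁_eq_X [Nontrivial R] [NeZero n] {f g : Fin n → MvPolynomial (Fin n) R}
    (h : ∀ i, bind₁ g (f i) = X i) : 0 < mvDeg g := by
  have h1 : 1 ≤ mvDeg f * mvDeg g := by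
    rw [← mvDeg_X (R := R) (n := n), ← funext h]
    exact mvDeg_mvComp_le f g
  exact Nat.pos_of_ne_zero fun h0 => by simp [h0] at h1

theorem homogeneousComponent_mvComp {g f : Fin n → MvPolynomial (Fin n) R} (hf : 0 < mvDeg f)
    (i : Fin n) : homogeneousComponent (mvDeg g * mvDeg f) (mvComp g f i) =
      bind₁ (topPart f) (topPart g i) :=
  homogeneousComponent_bind₁ hf (totalDegree_le_mvDeg f) (totalDegree_le_mvDeg g i)

theorem mvDeg_eq_iff_exists_homogeneousComponent_ne_zero {f : Fin n → MvPolynomial (Fin n) R}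
    {d : ℕ} (hd : 0 < d) (hf : mvDeg f ≤ d) :
    mvDeg f = d ↔ ∃ i, homogeneousComponent d (f i) ≠ 0 := by
  constructor
  · rintro rfl
    have : NeZero n := ⟨by rintro rfl; simp [mvDeg] at hd⟩
    obtain ⟨i, hi⟩ := exists_totalDegree_eq_mvDeg f
    exact ⟨i, topPart_ne_zero hi hd⟩
  · rintro ⟨i, hi⟩
    refine le_antisymm hf (le_trans ?_ (totalDegree_le_mvDeg f i))
    by_contra! hlt
    exact hi (homogeneousComponent_eq_zero _ _ hlt)

end PolynomialMaps

namespace PlaneAutomorphism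

variable {k : Type*} [Field k]

theorem exists_eq_smul_of_cross_eq_zero {w u : Fin 2 → k} (hw : w ≠ 0)
    (h : u 1 * w 0 - u 0 * w 1 = 0) : ∃ c : k, u = c • w := by
  have hw' : w 0 ≠ 0 ∨ w 1 ≠ 0 := by simpa [Function.ne_iff, Fin.exists_fin_two] using hw
  rcases hw' with h0 | h1
  · refine ⟨u 0 / w 0, funext fun i => ?_⟩
    fin_cases i
    · simp [h0]
    · simp only [Fin.mk_one, Pi.smul_apply, smul_eq_mul]
      field_simp
      linear_combination h
  · refine ⟨u 1 / w 1, funext fun i => ?_⟩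
    fin_cases i
    · simp only [Fin.zero_eta, Pi.smul_apply, smul_eq_mul]
      field_simp
      linear_combination -h
    · simp [h1]

/-- Projectively: the binary form `P` has at most one zero in `ℙ¹`. -/
def ZerosOnLine (P : MvPolynomial (Fin 2) k) : Prop :=
  ∃ w : Fin 2 → k, ∀ u, eval u P = 0 → ∃ c : k, u = c • w

theorem ZerosOnLine.exists_eq_smul {P : MvPolynomial (Fin 2) k} (hP : ZerosOnLine P)
    {u v : Fin 2 → k} (hu : u ≠ 0) (hPu : eval u P = 0) (hPv : eval v P = 0) :
    ∃ c : k, v = c • u := by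
  obtain ⟨w, hw⟩ := hP
  obtain ⟨a, rfl⟩ := hw u hPu
  obtain ⟨b, rfl⟩ := hw v hPv
  have ha : a ≠ 0 := by rintro rfl; simp at hu
  exact ⟨b / a, by rw [smul_smul, div_mul_cancel₀ _ ha]⟩

theorem exists_ne_zero_eval_ne_zero [Infinite k] {σ : Type*} {P : MvPolynomial σ k} {m : ℕ}
    (hP : P.IsHomogeneous m) (hm : 0 < m) (hP0 : P ≠ 0) : ∃ u ≠ 0, eval u P ≠ 0 := by
  obtain ⟨u, hu⟩ : ∃ u, eval u P ≠ 0 := by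
    by_contra! h
    exact hP0 (MvPolynomial.funext fun x => by rw [h x, map_zero])
  refine ⟨u, ?_, hu⟩
  rintro rfl
  simp [constantCoeff_eq, hP.coeff_eq_zero, hm.ne] at hu

noncomputable def lineForm (u : Fin 2 → k) : MvPolynomial (Fin 2) k :=
  C (u 1) * X 0 - C (u 0) * X 1

noncomputable def restrictLine (u : Fin 2 → k) : MvPolynomial (Fin 2) k →ₐ[k] k[X] :=
  aeval fun i => Polynomial.C (u i) * Polynomial.X

theorem restrictLine_apply (u : Fin 2 → k) (p : MvPolynomial (Fin 2) k) :
    restrictLine u p = (dilation p).map (eval u) := by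
  rw [← coe_aeval_eq_eval, ← Polynomial.coe_mapAlgHom, ← AlgHom.comp_apply]
  congr 1
  refine algHom_ext fun i => ?_
  simp [restrictLine, dilation]

theorem natDegree_restrictLine_le (u : Fin 2 → k) (p : MvPolynomial (Fin 2) k) :
    (restrictLine u p).natDegree ≤ p.totalDegree := by
  rw [restrictLine_apply]
  exact Polynomial.natDegree_map_le.trans (natDegree_dilation_le_iff.mpr le_rfl)

theorem natDegree_restrictLine_eq_iff (u : Fin 2 → k) {p : MvPolynomial (Fin 2) k}
    (hp : 0 < p.totalDegree) : (restrictLine u p).natDegree = p.totalDegree ↔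
      eval u (homogeneousComponent p.totalDegree p) ≠ 0 := by
  have hcoeff : (restrictLine u p).coeff p.totalDegree =
      eval u (homogeneousComponent p.totalDegree p) := by
    rw [restrictLine_apply, Polynomial.coeff_map, coeff_dilation]
  refine ⟨fun h h0 => ?_, fun h => Polynomial.natDegree_eq_of_le_of_coeff_ne_zero
    (natDegree_restrictLine_le u p) (hcoeff ▸ h)⟩
  rw [← hcoeff, ← h, ← Polynomial.leadingCoeff, Polynomial.leadingCoeff_eq_zero] at h0
  rw [h0, Polynomial.natDegree_zero] at h
  omega

theorem restrictLine_lineForm (u : Fin 2 → k) : restrictLine u (lineForm u) = 0 := by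
  simp only [restrictLine, lineForm, map_sub, map_mul, aeval_C, aeval_X, Polynomial.algebraMap_eq]
  ring

theorem exists_restrictLine_eq_X {u : Fin 2 → k} (hu : u ≠ 0) :
    ∃ μ, restrictLine u μ = Polynomial.X ∧ ∀ i, C (u i) * μ - X i ∈ Ideal.span {lineForm u} := by
  have hC {a : k} (ha : a ≠ 0) : (C a * C a⁻¹ : MvPolynomial (Fin 2) k) = 1 := by
    rw [← C_mul, mul_inv_cancel₀ ha, C_1]
  have hu' : u 0 ≠ 0 ∨ u 1 ≠ 0 := by simpa [Function.ne_iff, Fin.exists_fin_two] using hu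
  simp only [Ideal.mem_span_singleton', Fin.forall_fin_two, restrictLine, lineForm]
  rcases hu' with h0 | h1
  · refine ⟨C (u 0)⁻¹ * X 0, ?_, ⟨0, ?_⟩, ⟨C (u 0)⁻¹, ?_⟩⟩
    · simp [← mul_assoc, ← Polynomial.C_mul, h0]
    · linear_combination (-X 0) * hC h0
    · linear_combination (-X 1) * hC h0
  · refine ⟨C (u 1)⁻¹ * X 1, ?_, ⟨-C (u 1)⁻¹, ?_⟩, ⟨0, ?_⟩⟩
    · simp [← mul_assoc, ← Polynomial.C_mul, h1]
    · linear_combination (-X 0) * hC h1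
    · linear_combination (-X 1) * hC h1

theorem restrictLine_surjective {u : Fin 2 → k} (hu : u ≠ 0) :
    Function.Surjective (restrictLine u) :=
  Polynomial.surjective_of_apply_eq_X (exists_restrictLine_eq_X hu).choose_spec.1

theorem ker_restrictLine {u : Fin 2 → k} (hu : u ≠ 0) :
    RingHom.ker (restrictLine u) = Ideal.span {lineForm u} := by
  obtain ⟨μ, -, hμX⟩ := exists_restrictLine_eq_X hu
  refine ker_eq_span_of_aeval_apply_X_sub_X_mem (a := μ) (restrictLine_lineForm u) fun i => ?_
  simpa [restrictLine, Polynomial.aeval_algebraMap_apply] using hμX i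

theorem apply_lineForm (Θ : MvPolynomial (Fin 2) k →ₐ[k] k[X]) (u : Fin 2 → k) :
    Θ (lineForm u) = Polynomial.C (u 1) * Θ (X 0) - Polynomial.C (u 0) * Θ (X 1) := by
  simp [lineForm, Polynomial.algebraMap_eq]

theorem zerosOnLine_of_ker_eq_span [Infinite k] {g : MvPolynomial (Fin 2) k}
    (hg : 0 < g.totalDegree) {Θ : MvPolynomial (Fin 2) k →ₐ[k] k[X]}
    (hΘ : Function.Surjective Θ) (hker : RingHom.ker Θ = Ideal.span {g}) :
    ZerosOnLine (homogeneousComponent g.totalDegree g) := by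
  have hg0 : g ≠ 0 := by rintro rfl; simp at hg
  set N := max (Θ (X 0)).natDegree (Θ (X 1)).natDegree
  set w : Fin 2 → k := fun i => (Θ (X i)).coeff N
  have hcount {u : Fin 2 → k} (hu : u ≠ 0) :
      (Θ (lineForm u)).natDegree = (restrictLine u g).natDegree :=
    Polynomial.natDegree_eq_natDegree_of_ker_eq_span hΘ (restrictLine_surjective hu) hker
      (ker_restrictLine hu)
  have hle (u : Fin 2 → k) : (Θ (lineForm u)).natDegree ≤ N := by
    rw [apply_lineForm]
    exact (Polynomial.natDegree_sub_le _ _).trans (max_le_max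
      (Polynomial.natDegree_C_mul_le _ _) (Polynomial.natDegree_C_mul_le _ _))
  have hDN : g.totalDegree ≤ N := by
    obtain ⟨u, hu0, hu⟩ := exists_ne_zero_eval_ne_zero (homogeneousComponent_isHomogeneous _ g) hg
      (homogeneousComponent_totalDegree_ne_zero hg0)
    rw [← (natDegree_restrictLine_eq_iff u hg).mpr hu, ← hcount hu0]
    exact hle u
  have hw : w ≠ 0 := by
    rw [Function.ne_iff, Fin.exists_fin_two]
    exact Polynomial.coeff_max_natDegree_ne_zero (hg.trans_le hDN)
  refine ⟨w, fun u hu => ?_⟩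
  by_contra hne
  have hcross : u 1 * w 0 - u 0 * w 1 ≠ 0 := fun h => hne (exists_eq_smul_of_cross_eq_zero hw h)
  have hu0 : u ≠ 0 := by rintro rfl; simp at hcross
  have hN : (Θ (lineForm u)).natDegree = N :=
    Polynomial.natDegree_eq_of_le_of_coeff_ne_zero (hle u) (by simpa [apply_lineForm, w])
  have hD : (restrictLine u g).natDegree < g.totalDegree :=
    (natDegree_restrictLine_le u g).lt_of_ne fun h => (natDegree_restrictLine_eq_iff u hg).mp h hu
  have := hcount hu0
  omega

section Automorphism

variable {f g : Fin 2 → MvPolynomial (Fin 2) k}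

theorem zerosOnLine_of_bind₁_eq_X [Infinite k] (hfg : ∀ i, bind₁ f (g i) = X i)
    (hgf : ∀ i, bind₁ g (f i) = X i) {i₀ : Fin 2} (h : 0 < (f i₀).totalDegree) :
    ZerosOnLine (homogeneousComponent (f i₀).totalDegree (f i₀)) := by
  set L : Fin 2 → k[X] := fun j => if j = i₀ then 0 else Polynomial.X
  set Θ : MvPolynomial (Fin 2) k →ₐ[k] k[X] := (aeval L).comp (bind₁ g)
  have hΘf (j : Fin 2) : Θ (f j) = L j := by simp [Θ, hgf]
  have hrev : i₀.rev ≠ i₀ := by fin_cases i₀ <;> decide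
  have hother (j : Fin 2) (hj : j ≠ i₀) : j = i₀.rev := by fin_cases i₀ <;> fin_cases j <;> simp_all
  refine zerosOnLine_of_ker_eq_span (Θ := Θ) h
    (Polynomial.surjective_of_apply_eq_X (a := f i₀.rev) (by simp [hΘf, L, hrev]))
    (ker_eq_span_of_aeval_apply_X_sub_X_mem (a := f i₀.rev) (by simp [hΘf, L]) fun i => ?_)
  have hsub : Polynomial.aeval (f i₀.rev) (Θ (X i)) =
      aeval (fun j => Polynomial.aeval (f i₀.rev) (L j)) (g i) := by
    simp [Θ, comp_aeval_apply]
  rw [hsub, ← hfg i]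
  refine aeval_sub_aeval_mem _ (fun j => ?_) _
  by_cases hj : j = i₀
  · simp [L, hj]
  · simp [L, hother j hj, hrev]

theorem bind₁_topPart_eq_zero (hfg : ∀ i, bind₁ f (g i) = X i) (hdeg : 2 ≤ mvDeg f * mvDeg g)
    (i : Fin 2) : bind₁ (topPart f) (topPart g i) = 0 := by
  have hf : 0 < mvDeg f := Nat.pos_of_ne_zero fun h => by simp [h] at hdeg
  rw [← homogeneousComponent_mvComp hf, mvComp, hfg,
    homogeneousComponent_of_mem (isHomogeneous_X k i), if_neg (by rw [mul_comm]; omega)]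

theorem exists_topPart_eq_smul [IsAlgClosed k] (hfg : ∀ i, bind₁ f (g i) = X i)
    (hgf : ∀ i, bind₁ g (f i) = X i) (hdeg : 2 ≤ mvDeg f * mvDeg g) :
    ∃ (c : Fin 2 → k) (P : MvPolynomial (Fin 2) k), c ≠ 0 ∧ P ≠ 0 ∧
      P.IsHomogeneous (mvDeg f) ∧ ZerosOnLine P ∧ topPart f = fun i => c i • P := by
  have hf : 0 < mvDeg f := Nat.pos_of_ne_zero fun h => by simp [h] at hdeg
  have hg : 0 < mvDeg g := Nat.pos_of_ne_zero fun h => by simp [h] at hdeg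
  obtain ⟨i₀, hi₀⟩ := exists_totalDegree_eq_mvDeg f
  obtain ⟨j₀, hj₀⟩ := exists_totalDegree_eq_mvDeg g
  obtain ⟨c, hc, hfc⟩ := (isHomogeneous_topPart g j₀).exists_eq_smul_of_aeval_eq_zero
    (topPart_ne_zero hj₀ hg) (bind₁_topPart_eq_zero hfg hdeg j₀) (topPart_ne_zero hi₀ hf)
  refine ⟨c, topPart f i₀, fun h => by simp [h] at hc, topPart_ne_zero hi₀ hf,
    isHomogeneous_topPart f i₀, ?_, funext hfc⟩
  rw [topPart, ← hi₀]
  exact zerosOnLine_of_bind₁_eq_X hfg hgf (hi₀ ▸ hf)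

/-- `X_f = I_{f⁻¹}`: the point `c` to which `f` contracts the line at infinity is a zero of the
top part of `f⁻¹`. -/
theorem eval_topPart_eq_zero (hfg : ∀ i, bind₁ f (g i) = X i) (hdeg : 2 ≤ mvDeg f * mvDeg g)
    {c : Fin 2 → k} {P : MvPolynomial (Fin 2) k} (hP0 : P ≠ 0)
    (hfc : topPart f = fun i => c i • P) (i : Fin 2) : eval c (topPart g i) = 0 := by
  have h := bind₁_topPart_eq_zero hfg hdeg i
  rw [hfc, bind₁, (isHomogeneous_topPart g i).aeval_smul] at h
  exact (smul_eq_zero.mp h).resolve_right (pow_ne_zero _ hP0)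

theorem mvDeg_mvComp_self_eq_sq_iff {c : Fin 2 → k} {P : MvPolynomial (Fin 2) k}
    (hf : 0 < mvDeg f) (hP : P.IsHomogeneous (mvDeg f)) (hP0 : P ≠ 0) (hc : c ≠ 0)
    (hfc : topPart f = fun i => c i • P) :
    mvDeg (mvComp f f) = mvDeg f ^ 2 ↔ eval c P ≠ 0 := by
  have htop (i : Fin 2) : homogeneousComponent (mvDeg f * mvDeg f) (mvComp f f i) =
      (c i * eval c P) • P ^ mvDeg f := by
    rw [homogeneousComponent_mvComp hf, hfc, map_smul, bind₁, hP.aeval_smul, smul_smul]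
  rw [sq, mvDeg_eq_iff_exists_homogeneousComponent_ne_zero (Nat.mul_pos hf hf)
    (mvDeg_mvComp_le f f)]
  simp only [htop, ne_eq, smul_eq_zero, pow_eq_zero_iff', hP0, false_and, or_false, mul_eq_zero,
    not_or]
  obtain ⟨i, hi⟩ : ∃ i, c i ≠ 0 := by simpa [Function.ne_iff] using hc
  exact ⟨fun ⟨_, h⟩ => h.2, fun h => ⟨i, hi, h⟩⟩

end Automorphism

theorem forall_eval_smul_eq_zero_iff {c : Fin 2 → k} (hc : c ≠ 0) (P : MvPolynomial (Fin 2) k)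
    (u : Fin 2 → k) : (∀ i, eval u (c i • P) = 0) ↔ eval u P = 0 := by
  obtain ⟨i, hi⟩ : ∃ i, c i ≠ 0 := by simpa [Function.ne_iff] using hc
  exact ⟨fun h => by simpa [hi] using h i, fun h i => by simp [h]⟩

theorem exists_nonproportional_zeros_iff {P Q : MvPolynomial (Fin 2) k} {m : ℕ}
    (hP : P.IsHomogeneous m) (hPl : ZerosOnLine P) (hQl : ZerosOnLine Q) {c c' : Fin 2 → k}
    (hc : c ≠ 0) (hc' : c' ≠ 0) (hPc' : eval c' P = 0) (hQc : eval c Q = 0) :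
    (∃ u v : Fin 2 → k, u ≠ 0 ∧ v ≠ 0 ∧ eval u P = 0 ∧ eval v Q = 0 ∧ ∀ γ : k, v ≠ γ • u) ↔
      eval c P ≠ 0 := by
  constructor
  · rintro ⟨u, v, hu, -, hPu, hQv, huv⟩ hPc
    obtain ⟨a, rfl⟩ := hPl.exists_eq_smul hu hPu hPc
    obtain ⟨b, rfl⟩ := hQl.exists_eq_smul hc hQc hQv
    exact huv (b * a) (smul_smul b a u)
  · refine fun hPc => ⟨c', c, hc', hc, hPc', hQc, fun γ hγ => hPc ?_⟩
    have h := hP.aeval_smul c' γ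
    rw [aeval_eq_eval] at h
    rw [hγ, show γ • c' = fun i => c' i • γ from funext fun i => mul_comm _ _, h, hPc', zero_smul]

end PlaneAutomorphism

open PlaneAutomorphism in
theorem stmt_10 (k : Type*) [Field k] [IsAlgClosed k]
    (f finv : Fin 2 → MvPolynomial (Fin 2) k)
    (hf1 : ∀ i, MvPolynomial.bind₁ f (finv i) = MvPolynomial.X i)
    (hf2 : ∀ i, MvPolynomial.bind₁ finv (f i) = MvPolynomial.X i)
    (hdf : 2 ≤ mvDeg f) :
    -- `I_f ≠ I_{f⁻¹}` : there are nonzero, non-proportional representatives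
    -- of the indeterminacy points of `f` and of `f⁻¹` at infinity
    (∃ u v : Fin 2 → k, u ≠ 0 ∧ v ≠ 0 ∧
        (∀ i, MvPolynomial.eval u (topPart f i) = 0) ∧
        (∀ i, MvPolynomial.eval v (topPart finv i) = 0) ∧
        ∀ c : k, v ≠ c • u)
    ↔ mvDeg (mvComp f f) = (mvDeg f) ^ 2 := by
  have hdeg : 2 ≤ mvDeg f * mvDeg finv :=
    hdf.trans (Nat.le_mul_of_pos_right _ (mvDeg_pos_of_bind₁_eq_X hf2))
  have hdeg' : 2 ≤ mvDeg finv * mvDeg f := by rwa [mul_comm]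
  obtain ⟨c, P, hc, hP0, hP, hPl, hfc⟩ := exists_topPart_eq_smul hf1 hf2 hdeg
  obtain ⟨c', Q, hc', hQ0, -, hQl, hgc'⟩ := exists_topPart_eq_smul hf2 hf1 hdeg'
  have hPc' : eval c' P = 0 := by
    simpa only [hfc, forall_eval_smul_eq_zero_iff hc] using eval_topPart_eq_zero hf2 hdeg' hQ0 hgc'
  have hQc : eval c Q = 0 := by
    simpa only [hgc', forall_eval_smul_eq_zero_iff hc'] using eval_topPart_eq_zero hf1 hdeg hP0 hfc
  rw [mvDeg_mvComp_self_eq_sq_iff (by omega) hP hP0 hc hfc,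
    ← exists_nonproportional_zeros_iff hP hPl hQl hc hc' hPc' hQc, hfc, hgc']
  simp only [forall_eval_smul_eq_zero_iff hc, forall_eval_smul_eq_zero_iff hc']
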